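/- Let Ω ⊆ ℂ be open and let η : Ω → ℝ be twice continuously differentiable. Write η_z(z) = (1/2)(η_x(z) − i·η_y(z)), where η_x, η_y are the partial derivatives of η with respect to the real coordinates z = x + iy. Define Ẽ : Ω → M₂(ℂ) by Ẽ(z) = [[e^{−η(z)/2}(1 + z·η_z(z)), e^{η(z)/2}·z], [e^{−η(z)/2}·η_z(z), e^{η(z)/2}]]. Then: (a) det Ẽ(z) = 1 for all z ∈ Ω; (b) Ẽ is ℝ-differentiable on Ω, and for every z ∈ Ω and every v = v₁ + i·v₂ ∈ ℂ, the matrix A = Ẽ(z)⁻¹ · (DẼ(z))(v) (where DẼ(z) is the real Fréchet derivative of Ẽ at z) has trace zero, its (1,1) entry equals (i/2)·(η_x(z)·v₂ − η_y(z)·v₁) — in particular this entry has zero real part — and its (1,2) entry equals e^{η(z)}·(v₁ + i·v₂). -/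
import Mathlib


/-- The partial derivative `η_x(z)` of a real-valued function on `ℂ`. -/
noncomputable def etaX (η : ℂ → ℝ) (z : ℂ) : ℝ := fderiv ℝ η z 1

/-- The partial derivative `η_y(z)` of a real-valued function on `ℂ`. -/
noncomputable def etaY (η : ℂ → ℝ) (z : ℂ) : ℝ := fderiv ℝ η z Complex.I

/-- The Wirtinger derivative `η_z(z) = (1/2)(η_x(z) − i·η_y(z))`. -/
noncomputable def etaZ (η : ℂ → ℝ) (z : ℂ) : ℂ :=
  (1 / 2) * ((etaX η z : ℂ) - Complex.I * (etaY η z : ℂ))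

/-- The computation in the proof of Lemma 3.2 of the paper: the `SL₂(ℂ)`-valued map
`Ẽ` defining the Epstein map of the conformal metric `e^η|dz|` has determinant one,
is real-differentiable, and its Darboux derivative `Ẽ⁻¹·DẼ(v)` is trace-free with
purely imaginary `(1,1)` entry `(i/2)(η_x v₂ − η_y v₁)` and `(1,2)` entry `e^η·v`. -/
theorem epstein_darboux_derivative (Ω : Set ℂ) (hΩ : IsOpen Ω) (η : ℂ → ℝ)
    (hη : ContDiffOn ℝ 2 η Ω)
    (E : ℂ → Matrix (Fin 2) (Fin 2) ℂ)
    (hE : ∀ z ∈ Ω, E z =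
      !![Complex.exp (-(η z : ℂ) / 2) * (1 + z * etaZ η z),
           Complex.exp ((η z : ℂ) / 2) * z;
         Complex.exp (-(η z : ℂ) / 2) * etaZ η z,
           Complex.exp ((η z : ℂ) / 2)]) :
    ∀ z ∈ Ω,
      (E z).det = 1 ∧
      (∀ i j : Fin 2, DifferentiableAt ℝ (fun w => E w i j) z) ∧
      ∀ v : ℂ,
        Matrix.trace
            ((E z)⁻¹ * Matrix.of fun i j => fderiv ℝ (fun w => E w i j) z v) = 0 ∧
        ((E z)⁻¹ * Matrix.of fun i j => fderiv ℝ (fun w => E w i j) z v) 0 0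
          = (Complex.I / 2) * ((etaX η z : ℂ) * (v.im : ℂ) - (etaY η z : ℂ) * (v.re : ℂ)) ∧
        (((E z)⁻¹ * Matrix.of fun i j => fderiv ℝ (fun w => E w i j) z v) 0 0).re = 0 ∧
        ((E z)⁻¹ * Matrix.of fun i j => fderiv ℝ (fun w => E w i j) z v) 0 1
          = Complex.exp (η z : ℂ) * v := by
  intro z hz
  have hzmem : Ω ∈ nhds z := hΩ.mem_nhds hz
  -- differentiability of η and of the Wirtinger derivative
  have hηd : DifferentiableAt ℝ η z :=
    (hη.differentiableOn (by norm_num)).differentiableAt hzmem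
  have hfd : DifferentiableAt ℝ (etaZ η) z := by
    have h1 : ContDiffOn ℝ 1 (fun w => fderiv ℝ η w) Ω :=
      hη.fderiv_of_isOpen hΩ (by norm_num)
    have h2 : DifferentiableAt ℝ (fun w => fderiv ℝ η w) z :=
      (h1.differentiableOn (by norm_num)).differentiableAt hzmem
    have h3 : DifferentiableAt ℝ (fun w => ((fderiv ℝ η w 1 : ℝ) : ℂ)) z :=
      Complex.ofRealCLM.differentiableAt.comp z (h2.clm_apply (differentiableAt_const _))
    have h4 : DifferentiableAt ℝ (fun w => ((fderiv ℝ η w Complex.I : ℝ) : ℂ)) z :=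
      Complex.ofRealCLM.differentiableAt.comp z (h2.clm_apply (differentiableAt_const _))
    exact ((h3.sub (h4.const_mul Complex.I)).const_mul _)
  have hL : HasFDerivAt η (fderiv ℝ η z) z := hηd.hasFDerivAt
  have hM : HasFDerivAt (etaZ η) (fderiv ℝ (etaZ η) z) z := hfd.hasFDerivAt
  have hηC : HasFDerivAt (fun w => ((η w : ℝ) : ℂ))
      (Complex.ofRealCLM.comp (fderiv ℝ η z)) z :=
    Complex.ofRealCLM.hasFDerivAt.comp z hL
  -- the two exponential factors
  have hinnerN : HasFDerivAt (fun w => -(η w : ℂ) / 2)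
      ((-(1/2) : ℂ) • (Complex.ofRealCLM.comp (fderiv ℝ η z))) z := by
    have h : (fun w => -(η w : ℂ) / 2) = fun w => (-(1/2) : ℂ) * ((η w : ℝ) : ℂ) := by
      funext w; ring
    rw [h]; exact hηC.const_mul _
  have hinnerP : HasFDerivAt (fun w => (η w : ℂ) / 2)
      (((1/2) : ℂ) • (Complex.ofRealCLM.comp (fderiv ℝ η z))) z := by
    have h : (fun w => (η w : ℂ) / 2) = fun w => ((1/2) : ℂ) * ((η w : ℝ) : ℂ) := by
      funext w; ring
    rw [h]; exact hηC.const_mul _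
  have hEneg := hinnerN.cexp
  have hEpos := hinnerP.cexp
  -- derivatives of the four entries
  have hF00 : HasFDerivAt (fun w => Complex.exp (-(η w : ℂ) / 2) * (1 + w * etaZ η w))
      _ z := hEneg.mul (((hasFDerivAt_id z).mul hM).const_add (1 : ℂ))
  have hF01 : HasFDerivAt (fun w => Complex.exp ((η w : ℂ) / 2) * w) _ z :=
    hEpos.mul (hasFDerivAt_id z)
  have hF10 : HasFDerivAt (fun w => Complex.exp (-(η w : ℂ) / 2) * etaZ η w) _ z :=
    hEneg.mul hM
  have hF11 := hEpos
  -- eventual equality of the entries with the explicit formulas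
  have hEq00 : (fun w => E w 0 0) =ᶠ[nhds z]
      (fun w => Complex.exp (-(η w : ℂ) / 2) * (1 + w * etaZ η w)) := by
    filter_upwards [hzmem] with w hw
    rw [hE w hw]; simp
  have hEq01 : (fun w => E w 0 1) =ᶠ[nhds z]
      (fun w => Complex.exp ((η w : ℂ) / 2) * w) := by
    filter_upwards [hzmem] with w hw
    rw [hE w hw]; simp
  have hEq10 : (fun w => E w 1 0) =ᶠ[nhds z]
      (fun w => Complex.exp (-(η w : ℂ) / 2) * etaZ η w) := by
    filter_upwards [hzmem] with w hw
    rw [hE w hw]; simp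
  have hEq11 : (fun w => E w 1 1) =ᶠ[nhds z]
      (fun w => Complex.exp ((η w : ℂ) / 2)) := by
    filter_upwards [hzmem] with w hw
    rw [hE w hw]; simp
  -- exponential identities
  have hprod : Complex.exp (-(η z : ℂ) / 2) * Complex.exp ((η z : ℂ) / 2) = 1 := by
    rw [← Complex.exp_add, show -(η z : ℂ) / 2 + (η z : ℂ) / 2 = 0 from by ring,
      Complex.exp_zero]
  have hee2 : Complex.exp ((η z : ℂ) / 2) * Complex.exp ((η z : ℂ) / 2)
      = Complex.exp ((η z : ℂ)) := by
    rw [← Complex.exp_add, show (η z : ℂ) / 2 + (η z : ℂ) / 2 = (η z : ℂ) from by ring]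
  -- determinant
  have hdet : (E z).det = 1 := by
    rw [hE z hz, Matrix.det_fin_two_of]
    linear_combination hprod
  -- inverse
  have hinv : (E z)⁻¹ =
      !![Complex.exp ((η z : ℂ) / 2), -(Complex.exp ((η z : ℂ) / 2) * z);
         -(Complex.exp (-(η z : ℂ) / 2) * etaZ η z),
         Complex.exp (-(η z : ℂ) / 2) * (1 + z * etaZ η z)] := by
    rw [Matrix.inv_def, hdet, Ring.inverse_one, one_smul, hE z hz,
      Matrix.adjugate_fin_two_of]
  refine ⟨hdet, ?_, ?_⟩
  · intro i j
    fin_cases i <;> fin_cases j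
    · exact hF00.differentiableAt.congr_of_eventuallyEq hEq00
    · exact hF01.differentiableAt.congr_of_eventuallyEq hEq01
    · exact hF10.differentiableAt.congr_of_eventuallyEq hEq10
    · exact hF11.differentiableAt.congr_of_eventuallyEq hEq11
  intro v
  -- directional derivatives of the entries
  have hval00 : fderiv ℝ (fun w => E w 0 0) z v
      = Complex.exp (-(η z : ℂ) / 2) * ((v * etaZ η z + z * fderiv ℝ (etaZ η) z v)
        - ((fderiv ℝ η z v : ℝ) : ℂ) / 2 * (1 + z * etaZ η z)) := by
    rw [hEq00.fderiv_eq, hF00.fderiv]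
    simp [smul_eq_mul]
    ring
  have hval01 : fderiv ℝ (fun w => E w 0 1) z v
      = Complex.exp ((η z : ℂ) / 2) * (v + ((fderiv ℝ η z v : ℝ) : ℂ) / 2 * z) := by
    rw [hEq01.fderiv_eq, hF01.fderiv]
    simp [smul_eq_mul]
    ring
  have hval10 : fderiv ℝ (fun w => E w 1 0) z v
      = Complex.exp (-(η z : ℂ) / 2) * (fderiv ℝ (etaZ η) z v
        - ((fderiv ℝ η z v : ℝ) : ℂ) / 2 * etaZ η z) := by
    rw [hEq10.fderiv_eq, hF10.fderiv]
    simp [smul_eq_mul]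
    ring
  have hval11 : fderiv ℝ (fun w => E w 1 1) z v
      = Complex.exp ((η z : ℂ) / 2) * (((fderiv ℝ η z v : ℝ) : ℂ) / 2) := by
    rw [hEq11.fderiv_eq, hF11.fderiv]
    simp [smul_eq_mul]
    ring
  -- entries of the Darboux derivative
  have hA00 : ((E z)⁻¹ * Matrix.of fun i j => fderiv ℝ (fun w => E w i j) z v) 0 0
      = v * etaZ η z - ((fderiv ℝ η z v : ℝ) : ℂ) / 2 := by
    rw [hinv]
    simp only [Matrix.mul_apply, Fin.sum_univ_two, Matrix.of_apply,
      Matrix.cons_val', Matrix.cons_val_zero, Matrix.cons_val_one, Matrix.head_cons,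
      Matrix.empty_val', Matrix.cons_val_fin_one, Matrix.head_fin_const]
    rw [hval00, hval10]
    linear_combination (v * etaZ η z + z * fderiv ℝ (etaZ η) z v
      - ((fderiv ℝ η z v : ℝ) : ℂ) / 2 * (1 + z * etaZ η z)
      - z * (fderiv ℝ (etaZ η) z v
        - ((fderiv ℝ η z v : ℝ) : ℂ) / 2 * etaZ η z)) * hprod
  have hA01 : ((E z)⁻¹ * Matrix.of fun i j => fderiv ℝ (fun w => E w i j) z v) 0 1
      = Complex.exp ((η z : ℂ)) * v := by
    rw [hinv]
    simp only [Matrix.mul_apply, Fin.sum_univ_two, Matrix.of_apply,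
      Matrix.cons_val', Matrix.cons_val_zero, Matrix.cons_val_one, Matrix.head_cons,
      Matrix.empty_val', Matrix.cons_val_fin_one, Matrix.head_fin_const]
    rw [hval01, hval11]
    linear_combination v * hee2
  have hA11 : ((E z)⁻¹ * Matrix.of fun i j => fderiv ℝ (fun w => E w i j) z v) 1 1
      = ((fderiv ℝ η z v : ℝ) : ℂ) / 2 - v * etaZ η z := by
    rw [hinv]
    simp only [Matrix.mul_apply, Fin.sum_univ_two, Matrix.of_apply,
      Matrix.cons_val', Matrix.cons_val_zero, Matrix.cons_val_one, Matrix.head_cons,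
      Matrix.empty_val', Matrix.cons_val_fin_one, Matrix.head_fin_const]
    rw [hval01, hval11]
    linear_combination (((fderiv ℝ η z v : ℝ) : ℂ) / 2 - v * etaZ η z) * hprod
  -- the directional derivative of η in terms of partial derivatives
  have hv1 : v = v.re • (1 : ℂ) + v.im • Complex.I := by
    simp [Complex.real_smul, Complex.re_add_im]
  have hδ : fderiv ℝ η z v = etaX η z * v.re + etaY η z * v.im := by
    conv_lhs => rw [hv1]
    rw [map_add, map_smul, map_smul]
    simp [etaX, etaY, smul_eq_mul]
    ring
  have hv : v = (v.re : ℂ) + (v.im : ℂ) * Complex.I := (Complex.re_add_im v).symm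
  have key : v * etaZ η z - ((fderiv ℝ η z v : ℝ) : ℂ) / 2
      = (Complex.I / 2) * ((etaX η z : ℂ) * (v.im : ℂ) - (etaY η z : ℂ) * (v.re : ℂ)) := by
    rw [hδ]
    push_cast
    simp only [etaZ]
    linear_combination (((etaX η z : ℂ) - Complex.I * (etaY η z : ℂ)) / 2) * hv
      + (-(((v.im : ℝ) : ℂ) * ((etaY η z : ℝ) : ℂ)) / 2) * Complex.I_sq
  refine ⟨?_, ?_, ?_, ?_⟩
  · rw [Matrix.trace_fin_two, hA00, hA11]; ring
  · rw [hA00, key]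
  · rw [hA00, key]
    have h2 : (etaX η z : ℂ) * (v.im : ℂ) - (etaY η z : ℂ) * (v.re : ℂ)
        = ((etaX η z * v.im - etaY η z * v.re : ℝ) : ℂ) := by push_cast; ring
    have h3 : Complex.I / 2 * ((etaX η z * v.im - etaY η z * v.re : ℝ) : ℂ)
        = Complex.I * (((etaX η z * v.im - etaY η z * v.re) / 2 : ℝ) : ℂ) := by
      push_cast; ring
    rw [h2, h3]
    simp [Complex.mul_re]
  · rw [hA01]
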